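/- For all p, x, q, y ∈ ℝ^d and all vectors λ, ξ ∈ ℝ^d chosen (entrywise) to avoid the degenerate values making both weighted averages vanish while inputs don't, there exists a symplectic matrix M ∈ ℝ^{4d×4d} with M(p,x,q,y)ᵀ = (p̃, p̃, q̃, q̃)ᵀ, where p̃ᵏ = λᵏpᵏ + (1-λᵏ)xᵏ and q̃ᵏ = ξᵏqᵏ + (1-ξᵏ)yᵏ. Precisely: for each index k with (pᵏ)²+(xᵏ)²+(qᵏ)²+(yᵏ)² ≠ 0 assume not both p̃ᵏ = 0 and q̃ᵏ = 0. -/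

import Mathlib

/-!
The symplectic group of a nondegenerate alternating form `ω(a, b) = a ⬝ᵥ J *ᵥ b` acts
transitively on nonzero vectors. If `ω(v, w) ≠ 0`, the transvection
`z ↦ z + ω(z, w - v) / ω(v, w) • (w - v)` preserves `ω` and sends `v` to `w`; otherwise, since
a space is not the union of two proper subspaces, some `u` has `ω(v, u) ≠ 0 ≠ ω(u, w)`, and two
transvections pass through `u`. The hypothesis on `λ, ξ` ensures that `(p̃, p̃, q̃, q̃)`
vanishes only when `(p, x, q, y)` does.
-/

open Matrix

/-- The matrix of the symplectic form `Σᵢ (dpⁱ ∧ dqⁱ + dxⁱ ∧ dyⁱ)` on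
`ℝ^{4d}`, coordinates ordered `((p, x), (q, y))`. -/
def Jhat (d : ℕ) :
    Matrix ((Fin d ⊕ Fin d) ⊕ (Fin d ⊕ Fin d)) ((Fin d ⊕ Fin d) ⊕ (Fin d ⊕ Fin d)) ℝ :=
  Matrix.fromBlocks 0 1 (-1) 0

namespace Matrix

variable {K n : Type*} [Field K] [Fintype n] {J : Matrix n n K}

theorem transpose_mul_mul_eq_of_dotProduct_mulVec {M : Matrix n n K}
    (hM : ∀ a b, M *ᵥ a ⬝ᵥ J *ᵥ (M *ᵥ b) = a ⬝ᵥ J *ᵥ b) : Mᵀ * J * M = J := by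
  refine ext_iff_mulVec.2 fun b => dotProduct_eq_iff.1 fun a => ?_
  rw [dotProduct_comm, ← mulVec_mulVec, ← mulVec_mulVec, dotProduct_mulVec, vecMul_transpose,
    hM, dotProduct_comm]

theorem dotProduct_mulVec_swap (hJ : ∀ v, v ⬝ᵥ J *ᵥ v = 0) (a b : n → K) :
    a ⬝ᵥ J *ᵥ b = -(b ⬝ᵥ J *ᵥ a) := by
  have h := hJ (a + b)
  simp only [mulVec_add, dotProduct_add, add_dotProduct, hJ, zero_add, add_zero] at h
  exact eq_neg_of_add_eq_zero_right h

variable [DecidableEq n]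

def symplecticTransvection (J : Matrix n n K) (c : K) (u : n → K) : Matrix n n K :=
  1 + c • vecMulVec u (J *ᵥ u)

theorem symplecticTransvection_mulVec (c : K) (u z : n → K) :
    symplecticTransvection J c u *ᵥ z = z + (c * z ⬝ᵥ J *ᵥ u) • u := by
  rw [symplecticTransvection, add_mulVec, one_mulVec, smul_mulVec, vecMulVec_mulVec,
    op_smul_eq_smul, smul_smul, dotProduct_comm]

theorem symplecticTransvection_transpose_mul_mul (hJ : ∀ v, v ⬝ᵥ J *ᵥ v = 0) (c : K) (u : n → K) :
    (symplecticTransvection J c u)ᵀ * J * symplecticTransvection J c u = J := by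
  refine transpose_mul_mul_eq_of_dotProduct_mulVec fun a b => ?_
  simp only [symplecticTransvection_mulVec, mulVec_add, mulVec_smul, dotProduct_add,
    add_dotProduct, dotProduct_smul, smul_dotProduct, hJ, smul_eq_mul]
  rw [dotProduct_mulVec_swap hJ u b]
  ring

theorem symplecticTransvection_mulVec_eq_of_ne_zero (hJ : ∀ v, v ⬝ᵥ J *ᵥ v = 0) {v w : n → K}
    (h : v ⬝ᵥ J *ᵥ w ≠ 0) : symplecticTransvection J (v ⬝ᵥ J *ᵥ w)⁻¹ (w - v) *ᵥ v = w := by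
  rw [symplecticTransvection_mulVec, mulVec_sub, dotProduct_sub, hJ, sub_zero,
    inv_mul_cancel₀ h, one_smul, add_sub_cancel]

theorem exists_dotProduct_mulVec_ne_zero (hJ : IsUnit J) {v : n → K} (hv : v ≠ 0) :
    ∃ u, v ⬝ᵥ J *ᵥ u ≠ 0 := by
  have : v ᵥ* J ≠ 0 := fun h =>
    hv (vecMul_injective_iff_isUnit.2 hJ (h.trans (zero_vecMul J).symm))
  simpa [dotProduct_mulVec] using mt dotProduct_eq_zero_iff.1 this

theorem exists_dotProduct_mulVec_ne_zero_and_ne_zero (hJ : ∀ v, v ⬝ᵥ J *ᵥ v = 0)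
    (hJu : IsUnit J) {v w : n → K} (hv : v ≠ 0) (hw : w ≠ 0) :
    ∃ u, v ⬝ᵥ J *ᵥ u ≠ 0 ∧ u ⬝ᵥ J *ᵥ w ≠ 0 := by
  obtain ⟨u₁, hvu₁⟩ := exists_dotProduct_mulVec_ne_zero hJu hv
  obtain ⟨u₂, hwu₂⟩ := exists_dotProduct_mulVec_ne_zero hJu hw
  rw [dotProduct_mulVec_swap hJ, neg_ne_zero] at hwu₂
  by_cases hu₁w : u₁ ⬝ᵥ J *ᵥ w = 0
  · by_cases hvu₂ : v ⬝ᵥ J *ᵥ u₂ = 0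
    · refine ⟨u₁ + u₂, ?_, ?_⟩
      · rwa [mulVec_add, dotProduct_add, hvu₂, add_zero]
      · rwa [add_dotProduct, hu₁w, zero_add]
    · exact ⟨u₂, hvu₂, hwu₂⟩
  · exact ⟨u₁, hvu₁, hu₁w⟩

theorem exists_transpose_mul_mul_eq_and_mulVec_eq (hJ : ∀ v, v ⬝ᵥ J *ᵥ v = 0)
    (hJu : IsUnit J) {v w : n → K} (hv : v ≠ 0) (hw : w ≠ 0) :
    ∃ M : Matrix n n K, Mᵀ * J * M = J ∧ M *ᵥ v = w := by
  obtain ⟨u, hvu, huw⟩ := exists_dotProduct_mulVec_ne_zero_and_ne_zero hJ hJu hv hw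
  set A := symplecticTransvection J (u ⬝ᵥ J *ᵥ w)⁻¹ (w - u)
  set B := symplecticTransvection J (v ⬝ᵥ J *ᵥ u)⁻¹ (u - v)
  refine ⟨A * B, ?_, ?_⟩
  · calc (A * B)ᵀ * J * (A * B) = Bᵀ * (Aᵀ * J * A) * B := by
          simp only [transpose_mul, Matrix.mul_assoc]
      _ = J := by
          rw [symplecticTransvection_transpose_mul_mul hJ,
            symplecticTransvection_transpose_mul_mul hJ]
  · rw [← mulVec_mulVec, symplecticTransvection_mulVec_eq_of_ne_zero hJ hvu,
      symplecticTransvection_mulVec_eq_of_ne_zero hJ huw]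

end Matrix

theorem Jhat_eq_neg_J (d : ℕ) : Jhat d = -Matrix.J (Fin d ⊕ Fin d) ℝ := by
  simp [Jhat, Matrix.J, fromBlocks_neg]

theorem isUnit_Jhat (d : ℕ) : IsUnit (Jhat d) := by
  rw [Jhat_eq_neg_J, IsUnit.neg_iff, isUnit_iff_isUnit_det]
  exact isUnit_det_J _ _

theorem dotProduct_Jhat_mulVec_self (d : ℕ) (v : (Fin d ⊕ Fin d) ⊕ (Fin d ⊕ Fin d) → ℝ) :
    v ⬝ᵥ Jhat d *ᵥ v = 0 := by
  rw [Jhat, fromBlocks_mulVec, ← Sum.elim_comp_inl_inr v, sumElim_dotProduct_sumElim]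
  simp [neg_mulVec, dotProduct_comm]

/-- Theorem 2 of the paper: for any `p, x, q, y ∈ ℝ^d` and weights `λ, ξ`
avoiding the degenerate values (whenever the `k`-th inputs do not all vanish,
not both weighted averages vanish), there is a symplectic matrix `M` sending
`(p, x, q, y)` to `(p̃, p̃, q̃, q̃)`. -/
theorem stmt9 (d : ℕ) (p x q y l ξ : Fin d → ℝ)
    (hnd : ∀ k, (p k) ^ 2 + (x k) ^ 2 + (q k) ^ 2 + (y k) ^ 2 ≠ 0 →
      ¬(l k * p k + (1 - l k) * x k = 0 ∧ ξ k * q k + (1 - ξ k) * y k = 0)) :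
    ∃ M : Matrix ((Fin d ⊕ Fin d) ⊕ (Fin d ⊕ Fin d))
        ((Fin d ⊕ Fin d) ⊕ (Fin d ⊕ Fin d)) ℝ,
      Mᵀ * Jhat d * M = Jhat d ∧
      M.mulVec (Sum.elim (Sum.elim p x) (Sum.elim q y)) =
        Sum.elim
          (Sum.elim (fun k => l k * p k + (1 - l k) * x k)
            (fun k => l k * p k + (1 - l k) * x k))
          (Sum.elim (fun k => ξ k * q k + (1 - ξ k) * y k)
            (fun k => ξ k * q k + (1 - ξ k) * y k)) := by
  by_cases hv : Sum.elim (Sum.elim p x) (Sum.elim q y) = 0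
  · obtain ⟨⟨rfl, rfl⟩, rfl, rfl⟩ : (p = 0 ∧ x = 0) ∧ q = 0 ∧ y = 0 := by
      simpa [funext_iff, Sum.forall] using hv
    exact ⟨1, by simp, by ext ((k | k) | (k | k)) <;> simp⟩
  refine exists_transpose_mul_mul_eq_and_mulVec_eq (dotProduct_Jhat_mulVec_self d) (isUnit_Jhat d)
    hv fun hw => hv ?_
  have hzero : ∀ k, p k = 0 ∧ x k = 0 ∧ q k = 0 ∧ y k = 0 := fun k => by
    have hsq : p k ^ 2 + x k ^ 2 + q k ^ 2 + y k ^ 2 = 0 := not_not.1 fun h =>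
      hnd k h ⟨congrFun hw (.inl (.inl k)), congrFun hw (.inr (.inl k))⟩
    refine ⟨?_, ?_, ?_, ?_⟩ <;>
      nlinarith [sq_nonneg (p k), sq_nonneg (x k), sq_nonneg (q k), sq_nonneg (y k)]
  ext ((k | k) | (k | k)) <;> simp [hzero k]
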